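/- Let α > 0 be irrational and let (R,H) be a minimally safe rooted s-uniform hypergraph. Then for every S with R ⊂ S ⊂ V(H), the rooted hypergraph (S,H) is rigid. -/

import Mathlib

open scoped Classical

/-- A finite `s`-uniform hypergraph on a vertex set of natural numbers. -/
structure UniformHypergraph (s : ℕ) where
  V : Finset ℕ
  E : Finset (Finset ℕ)
  card_edges : ∀ e ∈ E, e.card = s
  edges_sub : ∀ e ∈ E, e ⊆ V

namespace UniformHypergraph

/-- The density `|E|/|V|` of a hypergraph. -/
noncomputable def density {s : ℕ} (G : UniformHypergraph s) : ℚ :=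
  (G.E.card : ℚ) / (G.V.card : ℚ)

/-- `G` is strictly balanced: every proper subhypergraph with at least one
vertex has strictly smaller density. -/
def StrictlyBalanced {s : ℕ} (G : UniformHypergraph s) : Prop :=
  G.V.Nonempty ∧ ∀ H : UniformHypergraph s, H.V ⊆ G.V → H.E ⊆ G.E → H.V.Nonempty →
    ¬(H.V = G.V ∧ H.E = G.E) → H.density < G.density

/-- The subhypergraph of `G` induced on the vertex set `S`. -/
def restrict {s : ℕ} (G : UniformHypergraph s) (S : Finset ℕ) : UniformHypergraph s where
  V := G.V ∩ S
  E := G.E.filter (fun e => e ⊆ S)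
  card_edges := fun e he => G.card_edges e (Finset.mem_filter.mp he).1
  edges_sub := fun e he a ha => Finset.mem_inter.mpr
    ⟨G.edges_sub e (Finset.mem_filter.mp he).1 ha, (Finset.mem_filter.mp he).2 ha⟩

/-- A cycle `(v 0, e 0, v 1, e 1, …, v (m-1), e (m-1), v m = v 0)` in `G`. -/
def IsCycle {s : ℕ} (G : UniformHypergraph s) (m : ℕ) (v : ℕ → ℕ) (e : ℕ → Finset ℕ) : Prop :=
  0 < m ∧ v m = v 0 ∧ e m = e 0 ∧
  (∀ i < m, e i ∈ G.E) ∧ (∀ i < m, v i ∈ G.V) ∧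
  (∀ i < m, v i ≠ v (i + 1)) ∧ (∀ i < m, e i ≠ e (i + 1)) ∧
  (∀ i < m, v i ∈ e i ∧ v (i + 1) ∈ e i)

/-- `G` is connected: it is nonempty and any two vertices are joined by a
chain of edges. -/
def Connected {s : ℕ} (G : UniformHypergraph s) : Prop :=
  G.V.Nonempty ∧ ∀ u ∈ G.V, ∀ w ∈ G.V,
    Relation.ReflTransGen (fun a b => ∃ e ∈ G.E, a ∈ e ∧ b ∈ e) u w

/-- A tree is a connected hypergraph without cycles. -/
def IsTree {s : ℕ} (G : UniformHypergraph s) : Prop :=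
  G.Connected ∧ ¬ ∃ m v e, G.IsCycle m v e

/-- For a rooted pair: number of nonroot vertices minus `α` times the number of
edges with at least one nonroot vertex, for roots `S` in the hypergraph `K`. -/
noncomputable def exVal {s : ℕ} (α : ℝ) (S : Finset ℕ) (K : UniformHypergraph s) : ℝ :=
  ((K.V \ S).card : ℝ) - ((K.E.filter (fun f => ¬ f ⊆ S)).card : ℝ) * α

/-- The rooted hypergraph `(S, K)` is dense: `v - e·α < 0`. -/
noncomputable def IsDense {s : ℕ} (α : ℝ) (S : Finset ℕ) (K : UniformHypergraph s) : Prop :=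
  exVal α S K < 0

/-- The rooted hypergraph `(S, K)` is sparse: `v - e·α > 0`. -/
noncomputable def IsSparse {s : ℕ} (α : ℝ) (S : Finset ℕ) (K : UniformHypergraph s) : Prop :=
  0 < exVal α S K

/-- `(R, K)` is rigid: every nailextension `(S, K)` with `R ⊆ S ⊊ V(K)` is dense. -/
noncomputable def Rigid {s : ℕ} (α : ℝ) (R : Finset ℕ) (K : UniformHypergraph s) : Prop :=
  ∀ S : Finset ℕ, R ⊆ S → S ⊂ K.V → IsDense α S K

/-- `(R, K)` is safe: every subextension `(R, K|_S)` with `R ⊊ S ⊆ V(K)` is sparse. -/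
noncomputable def Safe {s : ℕ} (α : ℝ) (R : Finset ℕ) (K : UniformHypergraph s) : Prop :=
  ∀ S : Finset ℕ, R ⊂ S → S ⊆ K.V → IsSparse α R (K.restrict S)

/-- `(R, K)` is minimally safe: safe, with no safe nailextension. -/
noncomputable def MinimallySafe {s : ℕ} (α : ℝ) (R : Finset ℕ) (K : UniformHypergraph s) : Prop :=
  Safe α R K ∧ ¬ ∃ S : Finset ℕ, R ⊂ S ∧ S ⊂ K.V ∧ Safe α S K

/-- A rigid `t`-chain `x 0 ⊆ x 1 ⊆ … ⊆ x k` in `G`: each step adds at most `t`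
vertices and each `(x i, G|_{x (i+1)})` is rigid. -/
noncomputable def IsRigidChain {s : ℕ} (α : ℝ) (G : UniformHypergraph s) (t k : ℕ)
    (x : ℕ → Finset ℕ) : Prop :=
  (∀ i < k, x i ⊆ x (i + 1)) ∧ (∀ i < k, (x (i + 1) \ x i).card ≤ t) ∧
  (∀ i ≤ k, x i ⊆ G.V) ∧ (∀ i < k, Rigid α (x i) (G.restrict (x (i + 1))))

/-- `C` is the `t`-closure of `X` in `G`: it is the endpoint of a rigid
`t`-chain starting at `X` and contains the endpoint of every such chain. -/
noncomputable def IsTClosure {s : ℕ} (α : ℝ) (G : UniformHypergraph s) (t : ℕ)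
    (X C : Finset ℕ) : Prop :=
  (∃ k x, IsRigidChain α G t k x ∧ x 0 = X ∧ x k = C) ∧
  ∀ k' x', IsRigidChain α G t k' x' → x' 0 = X → x' k' ⊆ C

end UniformHypergraph

open UniformHypergraph

/-- The possible edges of an `s`-uniform hypergraph on `Fin n`. -/
def edgeCandidates (s n : ℕ) : Finset (Finset (Fin n)) :=
  Finset.univ.filter (fun e => e.card = s)

/-- The probability of the event `A` under the binomial random `s`-uniform
hypergraph `G^s(n,p)`: each of the `C(n,s)` possible edges appears
independently with probability `p`. -/
noncomputable def hyperProb (s n : ℕ) (p : ℝ) (A : Set (Finset (Finset (Fin n)))) : ℝ :=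
  ∑ E ∈ (edgeCandidates s n).powerset,
    if E ∈ A then p ^ E.card * (1 - p) ^ ((edgeCandidates s n).card - E.card) else 0

/-- The `s`-uniform hypergraph on vertex set `{0,…,n-1}` determined by an
edge set over `Fin n`. -/
noncomputable def ofEdges (s n : ℕ) (E : Finset (Finset (Fin n))) : UniformHypergraph s where
  V := Finset.range n
  E := (E.filter (fun e => e.card = s)).image (fun e => e.image Fin.val)
  card_edges := by
    intro f hf
    simp only [Finset.mem_image, Finset.mem_filter] at hf
    obtain ⟨e, ⟨_, hcard⟩, rfl⟩ := hf
    rw [Finset.card_image_of_injective _ Fin.val_injective]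
    exact hcard
  edges_sub := by
    intro f hf a ha
    simp only [Finset.mem_image, Finset.mem_filter] at hf
    obtain ⟨e, _, rfl⟩ := hf
    simp only [Finset.mem_image] at ha
    obtain ⟨b, _, rfl⟩ := ha
    exact Finset.mem_range.mpr b.isLt

namespace UniformHypergraph

variable {s : ℕ}

lemma exVal_eq_exVal_restrict_add (α : ℝ) (H : UniformHypergraph s) {X Y : Finset ℕ}
    (hXY : X ⊆ Y) (hY : Y ⊆ H.V) :
    exVal α X H = exVal α X (H.restrict Y) + exVal α Y H := by
  have hvert : (H.V \ X).card = (Y \ X).card + (H.V \ Y).card := by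
    rw [← Finset.sdiff_union_sdiff_cancel hY hXY, add_comm,
      Finset.card_union_of_disjoint (Finset.sdiff_disjoint.mono_right Finset.sdiff_subset)]
  have hedge : (H.E.filter fun f => ¬ f ⊆ X).card =
      ((H.E.filter fun f => f ⊆ Y).filter fun f => ¬ f ⊆ X).card +
        (H.E.filter fun f => ¬ f ⊆ Y).card := by
    rw [← Finset.card_filter_add_card_filter_not (s := H.E.filter fun f => ¬ f ⊆ X)
      (fun f => f ⊆ Y), Finset.filter_comm]
    congr 2
    rw [Finset.filter_filter]
    exact Finset.filter_congr fun f _ =>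
      ⟨And.right, fun hfY => ⟨fun hfX => hfY (hfX.trans hXY), hfY⟩⟩
  simp only [exVal, restrict, Finset.inter_eq_right.mpr hY, hvert, hedge]
  push_cast
  ring

lemma exVal_V (α : ℝ) (H : UniformHypergraph s) : exVal α H.V H = 0 := by
  simp [exVal, Finset.filter_false_of_mem fun e he => not_not.mpr (H.edges_sub e he)]

/-- Otherwise `α = v / e` would be rational. -/
lemma exVal_ne_zero {α : ℝ} (hα : Irrational α) {X : Finset ℕ} {K : UniformHypergraph s}
    (hX : (K.V \ X).Nonempty) : exVal α X K ≠ 0 := by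
  intro h
  rw [exVal, sub_eq_zero] at h
  rcases Nat.eq_zero_or_pos (K.E.filter fun f => ¬ f ⊆ X).card with he | he
  · rw [he, Nat.cast_zero, zero_mul, Nat.cast_eq_zero, Finset.card_eq_zero] at h
    exact hX.ne_empty h
  · refine hα ⟨(K.V \ X).card / (K.E.filter fun f => ¬ f ⊆ X).card, ?_⟩
    rw [Rat.cast_div, Rat.cast_natCast, Rat.cast_natCast, h, mul_div_cancel_left₀]
    exact_mod_cast he.ne'

/-- A `⊆`-maximal sparse `(M, H)` with `M ⊇ T` is safe: `(M, H|_U)` and `(U, H)` add up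
to `(M, H)`, and `(U, H)` is not sparse by maximality. -/
lemma exists_safe_of_exVal_pos {α : ℝ} {H : UniformHypergraph s} {T : Finset ℕ}
    (hT : T ⊂ H.V) (hpos : 0 < exVal α T H) :
    ∃ M, T ⊆ M ∧ M ⊂ H.V ∧ Safe α M H := by
  obtain ⟨M, hTM, hM⟩ := (H.V.ssubsets.filter fun U => 0 < exVal α U H).exists_le_maximal
    (Finset.mem_filter.mpr ⟨Finset.mem_ssubsets.mpr hT, hpos⟩)
  obtain ⟨hMV, hMpos⟩ := Finset.mem_filter.mp hM.prop
  rw [Finset.mem_ssubsets] at hMV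
  refine ⟨M, hTM, hMV, fun U hMU hUV => ?_⟩
  have hU : exVal α U H ≤ 0 := by
    rcases hUV.eq_or_ssubset with rfl | hUV
    · exact (exVal_V α _).le
    · exact not_lt.mp fun hUpos =>
        hM.not_gt (Finset.mem_filter.mpr ⟨Finset.mem_ssubsets.mpr hUV, hUpos⟩) hMU
  have hsplit := exVal_eq_exVal_restrict_add α H hMU.subset hUV
  unfold IsSparse
  linarith

end UniformHypergraph

theorem stmt12_general (s : ℕ) (α : ℝ) (hirr : Irrational α)
    (H : UniformHypergraph s) (R : Finset ℕ)
    (hms : MinimallySafe α R H) :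
    ∀ S : Finset ℕ, R ⊂ S → S ⊂ H.V → Rigid α S H := by
  intro S hRS _ T hST hTV
  by_contra hnotDense
  have hpos : 0 < exVal α T H :=
    (not_lt.mp hnotDense).lt_of_ne' (exVal_ne_zero hirr (Finset.sdiff_nonempty.mpr hTV.2))
  obtain ⟨M, hTM, hMV, hMsafe⟩ := exists_safe_of_exVal_pos hTV hpos
  exact hms.2 ⟨M, hRS.trans_le (hST.trans hTM), hMV, hMsafe⟩

/-- if `(R,H)` is minimally safe then `(S,H)` is rigid for every
`R ⊊ S ⊊ V(H)`. -/
theorem stmt12 (s : ℕ) (hs : 2 ≤ s) (α : ℝ) (hα : 0 < α) (hirr : Irrational α)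
    (H : UniformHypergraph s) (R : Finset ℕ) (hR : R ⊂ H.V)
    (hms : MinimallySafe α R H) :
    ∀ S : Finset ℕ, R ⊂ S → S ⊂ H.V → Rigid α S H :=
  stmt12_general s α hirr H R hms
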